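/- arXiv:1601.06231 — 2 statements merged into one kernel-verified Lean document; each statement's English description precedes it below -/
import Mathlib

section
/- Let ρ_0,…,ρ_{M-1} be a quantum state set with Gram operator G = Σ_m ρ_m, let 0 ≤ p ≤ 1, and let Π_0,…,Π_M be an (M+1)-outcome POVM whose inconclusive probability is Tr(G Π_M) = p. Then for every a ≥ 0 and every positive semidefinite operator Z satisfying Z ≥ ρ_m for all m ∈ {0,…,M−1} and Z ≥ aG, the success probability satisfies Σ_{m=0}^{M-1} Tr(ρ_m Π_m) ≤ Tr Z − a·p. -/
/-
Weak duality for the semidefinite program of optimal discrimination with a fixed inconclusive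
rate. Each conclusive outcome gains at most what it would gain against the dual variable `Z`:
`Tr(ρ_m Π_m) ≤ Tr(Z Π_m)` because `Z - ρ_m` and `Π_m` are positive semidefinite. Summing over
`m < M` and using completeness of the POVM leaves `Tr Z - Tr(Z Π_M)`, and `Z ≥ aG` bounds the
subtracted term below by `a Tr(G Π_M) = a p`.
-/

open Matrix
open scoped ComplexOrder

/-- Positive part `A₊` of a Hermitian matrix (junk value `0` on non-Hermitian input). -/
noncomputable def matPosPart {n : ℕ} (A : Matrix (Fin n) (Fin n) ℂ) : Matrix (Fin n) (Fin n) ℂ :=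
  if hA : A.IsHermitian then
    (hA.eigenvectorUnitary : Matrix (Fin n) (Fin n) ℂ) *
      Matrix.diagonal (fun i => if 0 < hA.eigenvalues i then (hA.eigenvalues i : ℂ) else 0) *
      star (hA.eigenvectorUnitary : Matrix (Fin n) (Fin n) ℂ)
  else 0

/-- Projection `P₍>₎(A)` onto the span of eigenvectors of positive eigenvalues. -/
noncomputable def matProjPos {n : ℕ} (A : Matrix (Fin n) (Fin n) ℂ) : Matrix (Fin n) (Fin n) ℂ :=
  if hA : A.IsHermitian then
    (hA.eigenvectorUnitary : Matrix (Fin n) (Fin n) ℂ) *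
      Matrix.diagonal (fun i => if 0 < hA.eigenvalues i then (1 : ℂ) else 0) *
      star (hA.eigenvectorUnitary : Matrix (Fin n) (Fin n) ℂ)
  else 0

/-- Projection `P₍≥₎(A)` onto the span of eigenvectors of nonnegative eigenvalues. -/
noncomputable def matProjNonneg {n : ℕ} (A : Matrix (Fin n) (Fin n) ℂ) : Matrix (Fin n) (Fin n) ℂ :=
  if hA : A.IsHermitian then
    (hA.eigenvectorUnitary : Matrix (Fin n) (Fin n) ℂ) *
      Matrix.diagonal (fun i => if 0 ≤ hA.eigenvalues i then (1 : ℂ) else 0) *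
      star (hA.eigenvectorUnitary : Matrix (Fin n) (Fin n) ℂ)
  else 0

namespace Matrix

variable {𝕜 n : Type*} [RCLike 𝕜] [Fintype n]

theorem PosSemidef.trace_mul_nonneg {A B : Matrix n n 𝕜} (hA : A.PosSemidef)
    (hB : B.PosSemidef) : 0 ≤ (A * B).trace := by
  classical
  open scoped MatrixOrder in
  obtain ⟨C, rfl⟩ := CStarAlgebra.nonneg_iff_eq_star_mul_self.mp hB.nonneg
  rw [← Matrix.mul_assoc, trace_mul_cycle]
  exact (hA.mul_mul_conjTranspose_same C).trace_nonneg

theorem PosSemidef.trace_mul_le_trace_mul {A B P : Matrix n n 𝕜} (hAB : (B - A).PosSemidef)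
    (hP : P.PosSemidef) : (A * P).trace ≤ (B * P).trace := by
  simpa only [Matrix.sub_mul, trace_sub, sub_nonneg] using hAB.trace_mul_nonneg hP

end Matrix

theorem stmt_8_general {n M : ℕ} (ρ : ℕ → Matrix (Fin n) (Fin n) ℂ)
    (G : Matrix (Fin n) (Fin n) ℂ)
    (p : ℝ)
    (Pm : ℕ → Matrix (Fin n) (Fin n) ℂ)
    (hPm : ∀ m < M + 1, (Pm m).PosSemidef)
    (hPsum : ∑ m ∈ Finset.range (M + 1), Pm m = 1)
    (hPI : (G * Pm M).trace.re = p)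
    (a : ℝ)
    (Z : Matrix (Fin n) (Fin n) ℂ)
    (hZρ : ∀ m < M, (Z - ρ m).PosSemidef)
    (hZG : (Z - (a : ℂ) • G).PosSemidef) :
    ∑ m ∈ Finset.range M, ((ρ m * Pm m).trace).re ≤ Z.trace.re - a * p := by
  have conclusive_le : ∑ m ∈ Finset.range M, (ρ m * Pm m).trace
      ≤ ∑ m ∈ Finset.range M, (Z * Pm m).trace :=
    Finset.sum_le_sum fun m hm ↦ (hZρ m (Finset.mem_range.mp hm)).trace_mul_le_trace_mul
      (hPm m (Nat.lt_succ_of_lt (Finset.mem_range.mp hm)))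
  have completeness : ∑ m ∈ Finset.range M, (Z * Pm m).trace = Z.trace - (Z * Pm M).trace := by
    rw [Finset.sum_range_succ] at hPsum
    rw [← trace_sum, ← Finset.mul_sum, eq_sub_of_add_eq hPsum, Matrix.mul_sub, Matrix.mul_one,
      trace_sub]
  have inconclusive_ge : (a : ℂ) * (G * Pm M).trace ≤ (Z * Pm M).trace := by
    simpa only [Matrix.smul_mul, trace_smul, smul_eq_mul] using
      hZG.trace_mul_le_trace_mul (hPm M (by omega))
  have total_le : ∑ m ∈ Finset.range M, (ρ m * Pm m).trace
      ≤ Z.trace - (a : ℂ) * (G * Pm M).trace :=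
    conclusive_le.trans (completeness.trans_le (sub_le_sub_left inconclusive_ge _))
  simpa [Complex.re_sum, hPI] using (Complex.le_def.mp total_le).1

/-- For a quantum state set with Gram operator `G`, an `(M+1)`-outcome POVM
with inconclusive probability `Tr(G Π_M) = p`, every `a ≥ 0` and every PSD `Z` with
`Z ≥ ρ_m` for all `m` and `Z ≥ aG`, one has `Σ_m Tr(ρ_m Π_m) ≤ Tr Z − a·p`. -/
theorem stmt_8 {n M : ℕ} (hM : 0 < M) (ρ : ℕ → Matrix (Fin n) (Fin n) ℂ)
    (hρ : ∀ m < M, (ρ m).PosSemidef)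
    (hρpos : ∀ m < M, 0 < (ρ m).trace.re)
    (hρsum : ∑ m ∈ Finset.range M, (ρ m).trace.re = 1)
    (G : Matrix (Fin n) (Fin n) ℂ) (hG : G = ∑ m ∈ Finset.range M, ρ m)
    (p : ℝ) (hp0 : 0 ≤ p) (hp1 : p ≤ 1)
    (Pm : ℕ → Matrix (Fin n) (Fin n) ℂ)
    (hPm : ∀ m < M + 1, (Pm m).PosSemidef)
    (hPsum : ∑ m ∈ Finset.range (M + 1), Pm m = 1)
    (hPI : (G * Pm M).trace.re = p)
    (a : ℝ) (ha : 0 ≤ a)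
    (Z : Matrix (Fin n) (Fin n) ℂ) (hZ : Z.PosSemidef)
    (hZρ : ∀ m < M, (Z - ρ m).PosSemidef)
    (hZG : (Z - (a : ℂ) • G).PosSemidef) :
    ∑ m ∈ Finset.range M, ((ρ m * Pm m).trace).re ≤ Z.trace.re - a * p :=
  stmt_8_general ρ G p Pm hPm hPsum hPI a Z hZρ hZG
end

section
/- Let A and B be Hermitian operators on a finite-dimensional complex Hilbert space with A ≥ B. Then Tr(A_+) ≥ Tr(B_+), and equality holds if and only if A_+ = B_+. -/
/-! Let `P` be the spectral projection of `B` onto its positive eigenvalues, so that `B P = B₊`.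
Then `Tr A₊ - Tr B₊ = Tr((A - B) P) + Tr((A₊ - A) P) + Tr(A₊ (1 - P))`, and each term is the
trace of a product of two positive semidefinite matrices, hence nonnegative. If the sum vanishes,
so does each product (for `X = DᴴD`, `Y = CᴴC` one has `Tr(XY) = Tr((D Cᴴ)ᴴ (D Cᴴ))`), which gives
`A₊ = A₊ P = A P = B P = B₊`. -/

open Matrix
open scoped ComplexOrder

open scoped MatrixOrder

namespace Matrix.PosSemidef

variable {m 𝕜 : Type*} [Fintype m] [RCLike 𝕜] {X Y : Matrix m m 𝕜}

lemma exists_eq_conjTranspose_mul_self (hX : X.PosSemidef) : ∃ C : Matrix m m 𝕜, X = Cᴴ * C := by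
  classical exact CStarAlgebra.nonneg_iff_eq_star_mul_self.mp hX.nonneg

lemma trace_mul_nonneg_s15 (hX : X.PosSemidef) (hY : Y.PosSemidef) : 0 ≤ (X * Y).trace := by
  obtain ⟨C, rfl⟩ := hY.exists_eq_conjTranspose_mul_self
  rw [← Matrix.mul_assoc, trace_mul_cycle]
  exact (hX.mul_mul_conjTranspose_same C).trace_nonneg

lemma trace_mul_eq_zero_iff (hX : X.PosSemidef) (hY : Y.PosSemidef) :
    (X * Y).trace = 0 ↔ X * Y = 0 := by
  refine ⟨fun h => ?_, fun h => by rw [h, trace_zero]⟩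
  obtain ⟨D, rfl⟩ := hX.exists_eq_conjTranspose_mul_self
  obtain ⟨C, rfl⟩ := hY.exists_eq_conjTranspose_mul_self
  have hDC : D * Cᴴ = 0 := by
    rw [← trace_conjTranspose_mul_self_eq_zero_iff, ← h, conjTranspose_mul,
      conjTranspose_conjTranspose, ← Matrix.mul_assoc (Dᴴ * D), trace_mul_comm _ C]
    simp only [Matrix.mul_assoc]
  rw [Matrix.mul_assoc, ← Matrix.mul_assoc D, hDC, Matrix.zero_mul, Matrix.mul_zero]

end Matrix.PosSemidef

lemma Matrix.continuousOn_spectrum_real {m 𝕜 : Type*} [Fintype m] [DecidableEq m] [RCLike 𝕜]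
    (A : Matrix m m 𝕜) (f : ℝ → ℝ) : ContinuousOn f (spectrum ℝ A) :=
  A.finite_real_spectrum.continuousOn f

section PositivePart

variable {n : ℕ} {A B : Matrix (Fin n) (Fin n) ℂ}

lemma matPosPart_eq_cfc (hA : A.IsHermitian) :
    matPosPart A = cfc (fun x : ℝ => if 0 < x then x else 0) A := by
  rw [hA.cfc_eq, matPosPart, dif_pos hA, IsHermitian.cfc, Unitary.conjStarAlgAut_apply]
  congr 3
  funext i
  split_ifs <;> simp [*]

lemma matProjPos_eq_cfc (hA : A.IsHermitian) :
    matProjPos A = cfc (fun x : ℝ => if 0 < x then 1 else 0) A := by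
  rw [hA.cfc_eq, matProjPos, dif_pos hA, IsHermitian.cfc, Unitary.conjStarAlgAut_apply]
  congr 3
  funext i
  split_ifs <;> simp [*]

lemma posSemidef_matPosPart (hA : A.IsHermitian) : (matPosPart A).PosSemidef := by
  rw [matPosPart_eq_cfc hA]
  exact (cfc_nonneg fun x _ => by split_ifs <;> linarith).posSemidef

lemma posSemidef_matPosPart_sub (hA : A.IsHermitian) : (matPosPart A - A).PosSemidef := by
  have hcont := A.continuousOn_spectrum_real
  rw [matPosPart_eq_cfc hA]
  nth_rw 2 [← cfc_id' ℝ A hA.isSelfAdjoint]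
  rw [← cfc_sub _ _ A (hcont _) (hcont _)]
  exact (cfc_nonneg fun x _ => by split_ifs <;> linarith).posSemidef

lemma posSemidef_matProjPos (hA : A.IsHermitian) : (matProjPos A).PosSemidef := by
  rw [matProjPos_eq_cfc hA]
  exact (cfc_nonneg fun x _ => by split_ifs <;> norm_num).posSemidef

lemma posSemidef_one_sub_matProjPos (hA : A.IsHermitian) : (1 - matProjPos A).PosSemidef := by
  have hcont := A.continuousOn_spectrum_real
  rw [matProjPos_eq_cfc hA, ← cfc_const_one ℝ A hA.isSelfAdjoint, ← cfc_sub _ _ A (hcont _) (hcont _)]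
  exact (cfc_nonneg fun x _ => by split_ifs <;> norm_num).posSemidef

lemma mul_matProjPos (hA : A.IsHermitian) : A * matProjPos A = matPosPart A := by
  have hcont := A.continuousOn_spectrum_real
  nth_rw 1 [← cfc_id' ℝ A hA.isSelfAdjoint]
  rw [matProjPos_eq_cfc hA, matPosPart_eq_cfc hA, ← cfc_mul _ _ A (hcont _) (hcont _)]
  congr 1
  funext x
  split_ifs <;> simp

lemma trace_matPosPart_sub_trace_matPosPart (hB : B.IsHermitian) :
    (matPosPart A).trace - (matPosPart B).trace =
      ((A - B) * matProjPos B).trace + ((matPosPart A - A) * matProjPos B).trace +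
        (matPosPart A * (1 - matProjPos B)).trace := by
  rw [← mul_matProjPos hB, ← trace_sub, ← trace_add, ← trace_add]
  congr 1
  noncomm_ring

variable (hA : A.IsHermitian) (hB : B.IsHermitian) (hAB : (A - B).PosSemidef)
include hA hB hAB

lemma trace_matPosPart_le : (matPosPart B).trace ≤ (matPosPart A).trace := by
  have hP := posSemidef_matProjPos hB
  rw [← sub_nonneg, trace_matPosPart_sub_trace_matPosPart hB]
  exact add_nonneg (add_nonneg (hAB.trace_mul_nonneg_s15 hP)
    ((posSemidef_matPosPart_sub hA).trace_mul_nonneg_s15 hP))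
    ((posSemidef_matPosPart hA).trace_mul_nonneg_s15 (posSemidef_one_sub_matProjPos hB))

lemma matPosPart_eq_of_trace_eq (h : (matPosPart A).trace = (matPosPart B).trace) :
    matPosPart A = matPosPart B := by
  have hP := posSemidef_matProjPos hB
  have hPos := posSemidef_matPosPart_sub hA
  have hCompl := posSemidef_one_sub_matProjPos hB
  have h₁ := hAB.trace_mul_nonneg_s15 hP
  have h₂ := hPos.trace_mul_nonneg_s15 hP
  have h₃ := (posSemidef_matPosPart hA).trace_mul_nonneg_s15 hCompl
  rw [← sub_eq_zero, trace_matPosPart_sub_trace_matPosPart hB,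
    add_eq_zero_iff_of_nonneg (add_nonneg h₁ h₂) h₃, add_eq_zero_iff_of_nonneg h₁ h₂,
    hAB.trace_mul_eq_zero_iff hP, hPos.trace_mul_eq_zero_iff hP,
    (posSemidef_matPosPart hA).trace_mul_eq_zero_iff hCompl] at h
  obtain ⟨⟨hABP, hPosP⟩, hComplP⟩ := h
  calc matPosPart A = matPosPart A * matProjPos B := by
        rwa [mul_sub, mul_one, sub_eq_zero] at hComplP
    _ = A * matProjPos B := by rwa [sub_mul, sub_eq_zero] at hPosP
    _ = B * matProjPos B := by rwa [sub_mul, sub_eq_zero] at hABP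
    _ = matPosPart B := mul_matProjPos hB

end PositivePart

/-- For Hermitian `A ≥ B`, `Tr(A₊) ≥ Tr(B₊)`, with equality iff `A₊ = B₊`. -/
theorem stmt_15 {n : ℕ} (A B : Matrix (Fin n) (Fin n) ℂ)
    (hA : A.IsHermitian) (hB : B.IsHermitian) (hAB : (A - B).PosSemidef) :
    (matPosPart B).trace.re ≤ (matPosPart A).trace.re ∧
    ((matPosPart A).trace.re = (matPosPart B).trace.re ↔ matPosPart A = matPosPart B) := by
  obtain ⟨hre, him⟩ := Complex.le_def.mp (trace_matPosPart_le hA hB hAB)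
  exact ⟨hre, fun h => matPosPart_eq_of_trace_eq hA hB hAB (Complex.ext h him.symm),
    fun h => by rw [h]⟩
end
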